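/- arXiv:2402.18952 — 13 statements merged into one kernel-verified Lean document; each statement's English description precedes it below -/
import Mathlib

section
/- Let K be a field and let p, q, a, b, c, d ∈ K. The algebra S(p,q,a,b,c,d) is endo-commutative if and only if the following five equations hold: pq + pc = pb² + a²b + abc; p(c − a) = (b − d)(p(b + d) − q(a + c)); p(d − b) = a² − c²; q² + pd = a² + qb² + ab² + abd; and q(d − b) = ab − cd. -/
/-- Multiplication of the 2-dimensional algebra `S(p,q,a,b,c,d)` on `K × K`,
with basis `e = (1,0)`, `f = (0,1)` and table
`e*e = f`, `f*f = p•e + q•f`, `e*f = a•e + b•f`, `f*e = c•e + d•f`. -/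
def mulS {K : Type*} [Field K] (p q a b c d : K) (u v : K × K) : K × K :=
  (u.1 * v.2 * a + u.2 * v.1 * c + u.2 * v.2 * p,
   u.1 * v.1 + u.1 * v.2 * b + u.2 * v.1 * d + u.2 * v.2 * q)

/-- `S(p,q,a,b,c,d)` is endo-commutative: `(x*x)*(y*y) = (x*y)*(x*y)`. -/
def EndoComm {K : Type*} [Field K] (p q a b c d : K) : Prop :=
  ∀ u v : K × K,
    mulS p q a b c d (mulS p q a b c d u u) (mulS p q a b c d v v) =
      mulS p q a b c d (mulS p q a b c d u v) (mulS p q a b c d u v)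

/-- `S(p,q,a,b,c,d)` and `S(p',q',a',b',c',d')` are isomorphic: there is a bijective
`K`-linear map between them preserving multiplication. -/
def IsoS {K : Type*} [Field K] (p q a b c d p' q' a' b' c' d' : K) : Prop :=
  ∃ φ : (K × K) ≃ₗ[K] (K × K),
    ∀ u v : K × K,
      φ (mulS p q a b c d u v) = mulS p' q' a' b' c' d' (φ u) (φ v)

theorem endoComm_iff {K : Type*} [Field K] (p q a b c d : K) :
    EndoComm p q a b c d ↔
      (p * q + p * c = p * b ^ 2 + a ^ 2 * b + a * b * c ∧
       p * (c - a) = (b - d) * (p * (b + d) - q * (a + c)) ∧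
       p * (d - b) = a ^ 2 - c ^ 2 ∧
       q ^ 2 + p * d = a ^ 2 + q * b ^ 2 + a * b ^ 2 + a * b * d ∧
       q * (d - b) = a * b - c * d) := by
  constructor
  · intro h
    have h1 := congrArg Prod.fst (h (1, 0) (0, 1))
    have h2 := congrArg Prod.snd (h (1, 0) (0, 1))
    have h3 := congrArg Prod.fst (h (1, 0) (1, 1))
    have h4 := congrArg Prod.snd (h (1, 0) (1, 1))
    have h5 := congrArg Prod.snd (h (0, 1) (1, 1))
    simp only [mulS] at h1 h2 h3 h4 h5
    refine ⟨by linear_combination h1,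
      by linear_combination -h5 - (q + b + d) * h4 + (q + b + d) * h2 - h3 + h1 + h2,
      by linear_combination h3 - h1,
      by linear_combination h2,
      by linear_combination h4 - h2⟩
  · rintro ⟨e1, e2, e3, e4, e5⟩ u v
    refine Prod.ext ?_ ?_ <;> simp only [mulS]
    · linear_combination (u.1 * v.2 - u.2 * v.1) ^ 2 * e1
        + (u.1 * u.2 * v.1 * v.2 - u.2 ^ 2 * v.1 ^ 2) * e2
        + (u.1 ^ 2 * v.1 * v.2 - u.1 * u.2 * v.1 ^ 2) * e3
        + (p * u.1 * u.2 * v.2 ^ 2 - p * u.2 ^ 2 * v.1 * v.2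
            + (a + c) * (u.1 * u.2 * v.1 * v.2 - u.2 ^ 2 * v.1 ^ 2)) * e5
    · linear_combination (u.1 * v.2 - u.2 * v.1) ^ 2 * e4
        + (u.1 * u.2 * v.2 ^ 2 - u.2 ^ 2 * v.1 * v.2) * e2
        + (u.1 * u.2 * v.1 * v.2 - u.2 ^ 2 * v.1 ^ 2) * e3
        + (q * u.1 * u.2 * v.2 ^ 2 - q * u.2 ^ 2 * v.1 * v.2
            + (b + d) * (u.1 * u.2 * v.1 * v.2 - u.2 ^ 2 * v.1 ^ 2)
            + u.1 ^ 2 * v.1 * v.2 - u.1 * u.2 * v.1 ^ 2) * e5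
end

section
/- Let K be a field and let p, q, a, b, c, d, p', q', a', b', c', d' ∈ K. The algebras S(p,q,a,b,c,d) and S(p',q',a',b',c',d') are isomorphic if and only if there exist x, y, z, w ∈ K with xw − yz ≠ 0 satisfying the eight equations: p'y² + (a'+c')xy = z; x² + q'y² + (b'+d')xy = w; p'w² + (a'+c')zw = px + qz; z² + q'w² + (b'+d')zw = py + qw; p'yw + a'xw + c'yz = ax + bz; xz + q'yw + b'xw + d'yz = ay + bw; p'yw + a'yz + c'xw = cx + dz; xz + q'yw + b'yz + d'xw = cy + dw. -/
/-! A linear automorphism of `K × K` is determined by the images `(x, y)` and `(z, w)` of `e` and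
`f`, and it is invertible exactly when its determinant `x * w - y * z` is nonzero. Both
multiplications are bilinear, so such a map is multiplicative as soon as it is so on the four pairs
of basis vectors; the two coordinates of `φ (e * e) = φ e * φ e`, `φ (f * f) = φ f * φ f`,
`φ (e * f) = φ e * φ f` and `φ (f * e) = φ f * φ e` are the eight equations. -/

open Module

section

variable {K : Type*} [Field K]

def basisImageMap (x y z w : K) (u : K × K) : K × K :=
  (u.1 * x + u.2 * z, u.1 * y + u.2 * w)

theorem exists_linearEquiv_prod_iff (P : (K × K → K × K) → Prop) :
    (∃ φ : (K × K) ≃ₗ[K] (K × K), P φ) ↔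
      ∃ x y z w : K, x * w - y * z ≠ 0 ∧ P (basisImageMap x y z w) := by
  constructor
  · rintro ⟨φ, hφ⟩
    obtain ⟨x, z, y, w, hM⟩ : ∃ x z y w : K,
        LinearMap.toMatrix (Basis.finTwoProd K) (Basis.finTwoProd K) (φ : K × K →ₗ[K] K × K) =
          !![x, z; y, w] :=
      ⟨_, _, _, _, Matrix.eta_fin_two _⟩
    have hdet := φ.isUnit_det (Basis.finTwoProd K) (Basis.finTwoProd K)
    rw [hM, Matrix.det_fin_two_of, mul_comm z y] at hdet
    have hφM : ⇑φ = basisImageMap x y z w := by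
      have h := Matrix.toLin_toMatrix (Basis.finTwoProd K) (Basis.finTwoProd K)
        (φ : K × K →ₗ[K] K × K)
      rw [hM] at h
      funext u
      rw [← LinearEquiv.coe_coe, ← h, Matrix.toLin_finTwoProd_apply, basisImageMap, mul_comm x,
        mul_comm z, mul_comm y, mul_comm w]
    exact ⟨x, y, z, w, hdet.ne_zero, hφM ▸ hφ⟩
  · rintro ⟨x, y, z, w, hdet, hP⟩
    set L := Matrix.toLin (Basis.finTwoProd K) (Basis.finTwoProd K) !![x, z; y, w]
    have hL : IsUnit (LinearMap.toMatrix (Basis.finTwoProd K) (Basis.finTwoProd K) L).det := by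
      simpa [L, Matrix.det_fin_two_of, mul_comm z y] using hdet
    refine ⟨LinearEquiv.ofIsUnitDet hL, ?_⟩
    convert hP using 1
    ext u <;> simp [L, basisImageMap, mul_comm]

theorem basisImageMap_map_mulS_iff (p q a b c d p' q' a' b' c' d' x y z w : K) :
    (∀ u v : K × K, basisImageMap x y z w (mulS p q a b c d u v) =
      mulS p' q' a' b' c' d' (basisImageMap x y z w u) (basisImageMap x y z w v)) ↔
      p' * y ^ 2 + (a' + c') * (x * y) = z ∧
        x ^ 2 + q' * y ^ 2 + (b' + d') * (x * y) = w ∧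
        p' * w ^ 2 + (a' + c') * (z * w) = p * x + q * z ∧
        z ^ 2 + q' * w ^ 2 + (b' + d') * (z * w) = p * y + q * w ∧
        p' * (y * w) + a' * (x * w) + c' * (y * z) = a * x + b * z ∧
        x * z + q' * (y * w) + b' * (x * w) + d' * (y * z) = a * y + b * w ∧
        p' * (y * w) + a' * (y * z) + c' * (x * w) = c * x + d * z ∧
        x * z + q' * (y * w) + b' * (y * z) + d' * (x * w) = c * y + d * w := by
  simp only [basisImageMap, mulS, Prod.ext_iff]
  constructor
  · intro h
    obtain ⟨hee₁, hee₂⟩ := h (1, 0) (1, 0)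
    obtain ⟨hff₁, hff₂⟩ := h (0, 1) (0, 1)
    obtain ⟨hef₁, hef₂⟩ := h (1, 0) (0, 1)
    obtain ⟨hfe₁, hfe₂⟩ := h (0, 1) (1, 0)
    dsimp only at hee₁ hee₂ hff₁ hff₂ hef₁ hef₂ hfe₁ hfe₂
    exact ⟨by linear_combination -hee₁, by linear_combination -hee₂,
      by linear_combination -hff₁, by linear_combination -hff₂,
      by linear_combination -hef₁, by linear_combination -hef₂,
      by linear_combination -hfe₁, by linear_combination -hfe₂⟩
  · rintro ⟨h₁, h₂, h₃, h₄, h₅, h₆, h₇, h₈⟩ u v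
    constructor
    · linear_combination
        -(u.1 * v.1) * h₁ - (u.2 * v.2) * h₃ - (u.1 * v.2) * h₅ - (u.2 * v.1) * h₇
    · linear_combination
        -(u.1 * v.1) * h₂ - (u.2 * v.2) * h₄ - (u.1 * v.2) * h₆ - (u.2 * v.1) * h₈

end

theorem isoS_iff {K : Type*} [Field K] (p q a b c d p' q' a' b' c' d' : K) :
    IsoS p q a b c d p' q' a' b' c' d' ↔
      ∃ x y z w : K, x * w - y * z ≠ 0 ∧
        p' * y ^ 2 + (a' + c') * (x * y) = z ∧
        x ^ 2 + q' * y ^ 2 + (b' + d') * (x * y) = w ∧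
        p' * w ^ 2 + (a' + c') * (z * w) = p * x + q * z ∧
        z ^ 2 + q' * w ^ 2 + (b' + d') * (z * w) = p * y + q * w ∧
        p' * (y * w) + a' * (x * w) + c' * (y * z) = a * x + b * z ∧
        x * z + q' * (y * w) + b' * (x * w) + d' * (y * z) = a * y + b * w ∧
        p' * (y * w) + a' * (y * z) + c' * (x * w) = c * x + d * z ∧
        x * z + q' * (y * w) + b' * (y * z) + d' * (x * w) = c * y + d * w := by
  refine (exists_linearEquiv_prod_iff fun f : K × K → K × K =>
    ∀ u v, f (mulS p q a b c d u v) = mulS p' q' a' b' c' d' (f u) (f v)).trans ?_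
  simp only [basisImageMap_map_mulS_iff]
end

section
/- Let K be a field and let q, a, c, d ∈ K with a ≠ 0 and c ≠ 0. The algebra S(0,q,a,0,c,d) is endo-commutative if and only if either (d ≠ 0, c = −a, and q = a) or (d = 0, c² = a², and q² = a²); equivalently, either d ≠ 0, c = −a, q = a, or else d = 0, c = δa and q = εa for some ε, δ ∈ {1, −1}. -/
theorem endoComm_II1_b_eq_zero {K : Type*} [Field K] (q a c d : K)
    (ha : a ≠ 0) (hc : c ≠ 0) :
    (EndoComm 0 q a 0 c d ↔
      ((d ≠ 0 ∧ c = -a ∧ q = a) ∨ (d = 0 ∧ c ^ 2 = a ^ 2 ∧ q ^ 2 = a ^ 2))) ∧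
    (EndoComm 0 q a 0 c d ↔
      ((d ≠ 0 ∧ c = -a ∧ q = a) ∨
       (d = 0 ∧ ∃ ε δ : K, (ε = 1 ∨ ε = -1) ∧ (δ = 1 ∨ δ = -1) ∧
          c = δ * a ∧ q = ε * a))) := by
  have main : EndoComm 0 q a 0 c d ↔
      ((d ≠ 0 ∧ c = -a ∧ q = a) ∨ (d = 0 ∧ c ^ 2 = a ^ 2 ∧ q ^ 2 = a ^ 2)) := by
    constructor
    · intro h
      have h1 := congrArg Prod.fst (h (1, 0) (1, 1))
      have h2 := congrArg Prod.snd (h (1, 0) (0, 1))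
      have h3 := congrArg Prod.fst (h (0, 1) (1, 0))
      have h4 := congrArg Prod.snd (h (1, 1) (0, 1))
      simp only [mulS] at h1 h2 h3 h4
      have hc2 : c ^ 2 = a ^ 2 := by linear_combination h1
      have hq2 : q ^ 2 = a ^ 2 := by linear_combination h2
      have hdca : d * (c + a) = 0 := by
        have : c * (d * (c + a)) = 0 := by linear_combination -h3
        rcases mul_eq_zero.1 this with h | h
        · exact absurd h hc
        · exact h
      have hq0 : q ≠ 0 := by
        intro h0
        apply ha
        have h2' : a ^ 2 = 0 := by rw [h0] at hq2; linear_combination -hq2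
        exact pow_eq_zero_iff two_ne_zero |>.1 h2'
      have hdqa : d * (q - a) = 0 := by
        have : q * (d * (q - a)) = 0 := by linear_combination h4 - hq2
        rcases mul_eq_zero.1 this with h | h
        · exact absurd h hq0
        · exact h
      by_cases hd : d = 0
      · exact Or.inr ⟨hd, hc2, hq2⟩
      · refine Or.inl ⟨hd, ?_, ?_⟩
        · have h := (mul_eq_zero.1 hdca).resolve_left hd
          linear_combination h
        · have h := (mul_eq_zero.1 hdqa).resolve_left hd
          linear_combination h
    · rintro (⟨hd, hca, hqa⟩ | ⟨hd, hc2, hq2⟩) <;>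
        intro u v <;> subst_vars <;>
        simp only [mulS, Prod.mk.injEq] <;> constructor
      · ring
      · ring
      · linear_combination (u.1 ^ 2 * v.1 * v.2 - u.1 * u.2 * v.1 ^ 2) * hc2
      · linear_combination
          (u.2 ^ 2 * v.1 ^ 2 + u.1 ^ 2 * v.2 ^ 2 - 2 * u.1 * u.2 * v.1 * v.2) * hq2 +
          (u.1 * u.2 * v.1 * v.2 - u.2 ^ 2 * v.1 ^ 2) * hc2
  refine ⟨main, main.trans ?_⟩
  constructor
  · rintro (h | ⟨hd, hc2, hq2⟩)
    · exact Or.inl h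
    · refine Or.inr ⟨hd, q / a, c / a, ?_, ?_, ?_, ?_⟩
      · have : (q - a) * (q + a) = 0 := by linear_combination hq2
        rcases mul_eq_zero.1 this with h | h
        · left; field_simp; linear_combination h
        · right; field_simp; linear_combination h
      · have : (c - a) * (c + a) = 0 := by linear_combination hc2
        rcases mul_eq_zero.1 this with h | h
        · left; field_simp; linear_combination h
        · right; field_simp; linear_combination h
      · field_simp
      · field_simp
  · rintro (h | ⟨hd, ε, δ, hε, hδ, hcd, hqe⟩)
    · exact Or.inl h
    · refine Or.inr ⟨hd, ?_, ?_⟩ <;> subst_vars <;>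
        rcases hε with h | h <;> rcases hδ with h' | h' <;> subst_vars <;> ring
end

section
/- Let K be a field and let a, b, c, d ∈ K with a ≠ 0, c ≠ 0 and b ≠ 0. Then the algebra S(0,0,a,b,c,d) is not endo-commutative. (In other words, there is no endo-commutative algebra S(p,q,a,b,c,d) with p = 0, q = 0, and a, b, c all nonzero.) -/
theorem not_endoComm_II1_q_eq_zero {K : Type*} [Field K] (a b c d : K)
    (ha : a ≠ 0) (hc : c ≠ 0) (hb : b ≠ 0) :
    ¬ EndoComm 0 0 a b c d := by
  intro h
  have h1 := h (1,0) (0,1)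
  have h2 := h (0,1) (1,0)
  simp only [mulS, Prod.mk.injEq] at h1 h2
  obtain ⟨h11, h12⟩ := h1
  obtain ⟨h21, h22⟩ := h2
  ring_nf at h11 h12 h21 h22
  have hac : c + a = 0 := by
    have h' : a * b * (c + a) = 0 := by linear_combination -h11
    rcases mul_eq_zero.mp h' with h' | h'
    · exact absurd h' (mul_ne_zero ha hb)
    · exact h'
  have h2' : b * d + b ^ 2 + a = 0 := by
    have h' : a * (b * d + b ^ 2 + a) = 0 := by linear_combination -h12
    exact (mul_eq_zero.mp h').resolve_left ha
  have h3' : b * d + d ^ 2 + c = 0 := by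
    have h' : c * (b * d + d ^ 2 + c) = 0 := by linear_combination -h22
    exact (mul_eq_zero.mp h').resolve_left hc
  have hbd : (b + d) ^ 2 = 0 := by linear_combination h2' + h3' - hac
  have hbd0 : b + d = 0 := by
    exact pow_eq_zero_iff (two_ne_zero) |>.mp hbd
  exact ha (by linear_combination h2' - b * hbd0)
end

section
/- Let K be a field and let q, a, b, c ∈ K with a ≠ 0, c ≠ 0, b ≠ 0 and q ≠ 0. The algebra S(0,q,a,b,c,0) is endo-commutative if and only if c = −a and q = −a. -/
theorem endoComm_II1_d_eq_zero {K : Type*} [Field K] (q a b c : K)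
    (ha : a ≠ 0) (hc : c ≠ 0) (hb : b ≠ 0) (hq : q ≠ 0) :
    EndoComm 0 q a b c 0 ↔ (c = -a ∧ q = -a) := by
  constructor
  · intro h
    have h1 := h (1, 0) (0, 1)
    have h2 := h (0, 1) (1, 0)
    simp only [mulS, Prod.mk.injEq] at h1 h2
    obtain ⟨h1a, h1b⟩ := h1
    obtain ⟨h2a, h2b⟩ := h2
    -- h1a : -a*b*(a+c) = 0 (roughly); h2b : q^2 = c^2; h1b : q^2 - a^2 - a*b^2 - q*b^2 = 0
    have hca : c = -a := by
      have h : a * b * (a + c) = 0 := by linear_combination -h1a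
      rcases mul_eq_zero.mp h with h | h
      · rcases mul_eq_zero.mp h with h | h
        · exact absurd h ha
        · exact absurd h hb
      · exact eq_neg_of_add_eq_zero_right h
    refine ⟨hca, ?_⟩
    have hq2 : q ^ 2 = a ^ 2 := by
      have h : q ^ 2 = c ^ 2 := by linear_combination h2b
      rw [hca] at h; linear_combination h
    have h : b ^ 2 * (a + q) = 0 := by linear_combination -h1b + hq2
    rcases mul_eq_zero.mp h with h | h
    · exact absurd (pow_eq_zero_iff (by norm_num) |>.mp h) hb
    · exact eq_neg_of_add_eq_zero_right h
  · rintro ⟨rfl, rfl⟩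
    intro u v
    simp only [mulS, Prod.mk.injEq]
    constructor <;> ring
end

section
/- Let K be a field of characteristic different from 2 and let q, a, b, c, d ∈ K all be nonzero. The algebra S(0,q,a,b,c,d) is endo-commutative if and only if c = −a, a = (d² − b²)/4 and q = (b + d)²/4; moreover, in that case b ≠ d and b ≠ −d. -/
lemma ec_forward {K : Type*} [Field K] (h2 : (2:K) ≠ 0) (q a b c d : K)
    (hq : q ≠ 0) (ha : a ≠ 0) (hb : b ≠ 0) (hd : d ≠ 0)
    (h : EndoComm 0 q a b c d) :
    c = -a ∧ b + d ≠ 0 ∧ b ≠ d ∧ q * 4 = (b + d) ^ 2 ∧ a * 4 = (d - b) * (d + b) := by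
  have A := h (1,0) (0,1)
  norm_num [mulS, Prod.ext_iff] at A
  obtain ⟨A1, A2⟩ := A
  have hca : c = -a := by
    have h0 : a * b * (a + c) = 0 := by linear_combination -A1
    have := (mul_eq_zero.mp h0).resolve_left (mul_ne_zero ha hb)
    linear_combination this
  subst hca
  have B := h (1,0) (1,1)
  norm_num [mulS, Prod.ext_iff] at B
  obtain ⟨B1, B2⟩ := B
  have E1 : a * (b + d) = q * (d - b) := by linear_combination A2 - B2
  have hs : b + d ≠ 0 := by
    intro hbd
    have h0 : q * b * 2 = 0 := by linear_combination E1 + (q - a) * hbd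
    exact mul_ne_zero (mul_ne_zero hq hb) h2 h0
  have hbd' : b ≠ d := by
    intro hbd
    exact mul_ne_zero ha hs (by linear_combination E1 - q * hbd)
  have E2 : a ^ 2 = q * (q - b * d) := by linear_combination -A2 - b * E1
  have h5 : q * ((q - b * d) * (b + d) ^ 2) = q * (q * (d - b) ^ 2) := by
    linear_combination -(b + d) ^ 2 * E2 + (a * (b + d) + q * (d - b)) * E1
  have h6 := mul_left_cancel₀ hq h5
  have key : (b * d) * (q * 4) = (b * d) * ((b + d) ^ 2) := by linear_combination h6
  have hq4 : q * 4 = (b + d) ^ 2 := mul_left_cancel₀ (mul_ne_zero hb hd) key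
  have key2 : (b + d) * (a * 4) = (b + d) * ((d - b) * (d + b)) := by
    linear_combination 4 * E1 + (d - b) * hq4
  exact ⟨rfl, hs, hbd', hq4, mul_left_cancel₀ hs key2⟩

theorem endoComm_II1_all_nonzero_char_ne_two {K : Type*} [Field K]
    (h2 : (2 : K) ≠ 0) (q a b c d : K)
    (hq : q ≠ 0) (ha : a ≠ 0) (hb : b ≠ 0) (hc : c ≠ 0) (hd : d ≠ 0) :
    (EndoComm 0 q a b c d ↔
      (c = -a ∧ a = (d ^ 2 - b ^ 2) / 4 ∧ q = (b + d) ^ 2 / 4)) ∧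
    (EndoComm 0 q a b c d → b ≠ d ∧ b ≠ -d) := by
  have h4 : (4 : K) ≠ 0 := by
    have := mul_ne_zero h2 h2; norm_num at this; exact this
  refine ⟨⟨fun h => ?_, ?_⟩, fun h => ?_⟩
  · obtain ⟨hca, hs, hbd', hq4, ha4⟩ := ec_forward h2 q a b c d hq ha hb hd h
    refine ⟨hca, ?_, ?_⟩
    · field_simp
      linear_combination ha4
    · field_simp
      linear_combination hq4
  · rintro ⟨hc', ha', hq'⟩
    subst hc' ha' hq'
    intro u v
    obtain ⟨u1, u2⟩ := u
    obtain ⟨v1, v2⟩ := v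
    simp only [mulS, Prod.ext_iff]
    constructor
    · field_simp
      ring
    · field_simp
      ring
  · obtain ⟨hca, hs, hbd', hq4, ha4⟩ := ec_forward h2 q a b c d hq ha hb hd h
    exact ⟨hbd', fun hbn => hs (by linear_combination hbn)⟩
end

section
/- Let K be a field of characteristic 2 and let q, a, b, c, d ∈ K all be nonzero. The algebra S(0,q,a,b,c,d) is endo-commutative if and only if c = a, d = b and q² + a² + qb² = 0. -/
theorem endoComm_II1_all_nonzero_char_two {K : Type*} [Field K] [CharP K 2]
    (q a b c d : K)
    (hq : q ≠ 0) (ha : a ≠ 0) (hb : b ≠ 0) (hc : c ≠ 0) (hd : d ≠ 0) :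
    EndoComm 0 q a b c d ↔
      (c = a ∧ d = b ∧ q ^ 2 + a ^ 2 + q * b ^ 2 = 0) := by
  have h2 : (2 : K) = 0 := by exact_mod_cast CharP.cast_eq_zero K 2
  constructor
  · intro H
    have E1 := H (0,1) (1,0)
    have E2 := H (1,0) (0,1)
    simp only [mulS, Prod.mk.injEq, mul_one, one_mul, mul_zero, zero_mul, add_zero,
      zero_add] at E1 E2
    obtain ⟨E1a, E1b⟩ := E1
    obtain ⟨E2a, E2b⟩ := E2
    have h3 : a * b * (a + c) = 0 := by linear_combination -E2a
    have hac : a + c = 0 := by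
      rcases mul_eq_zero.mp h3 with h | h
      · exact absurd h (mul_ne_zero ha hb)
      · exact h
    have hca : c = a := by linear_combination hac - a * h2
    rw [hca] at E1b
    have key : (a + q) * (b + d) ^ 2 = 0 := by
      linear_combination E1b - E2b + (a*d^2 + q*d^2 + a*b*d + q*b*d) * h2
    rcases mul_eq_zero.mp key with haq | hbd
    · exfalso
      have : q * b * d = 0 := by
        linear_combination E1b + (a - q + b*d + d^2) * haq
      exact absurd this (mul_ne_zero (mul_ne_zero hq hb) hd)
    · have hbd' : b + d = 0 := pow_eq_zero_iff two_ne_zero |>.mp hbd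
      have hdb : d = b := by linear_combination hbd' - b * h2
      refine ⟨hca, hdb, ?_⟩
      linear_combination E2b + a*b*hdb + (a^2 + q*b^2 + a*b^2) * h2
  · rintro ⟨hca, hdb, h3⟩
    rw [hca, hdb]
    intro u v
    simp only [mulS, Prod.mk.injEq]
    constructor
    · linear_combination (a^2*b*(2*u.1*u.2*v.1*v.2 - u.2^2*v.1^2 - u.1^2*v.2^2)) * h2
    · linear_combination (u.1^2*v.2^2 + u.2^2*v.1^2) * h3 +
        (-(a*b^2 + a^2 + q*b^2)*(u.2^2*v.1^2 + u.1^2*v.2^2) +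
          (2*a*b^2 + a^2 + q*b^2 - q^2)*u.1*u.2*v.1*v.2) * h2
end

section
/- Let K = F₂(X) be the field of rational functions in one variable over the field with two elements, and define the equivalence relation ~₂ on K* by t ~₂ t' iff t + t' = x² + x for some x ∈ K. Then for all natural numbers i ≠ j one has X^{2i+1} ≁₂ X^{2j+1}; consequently ~₂ has countably infinitely many equivalence classes on K*. -/
/-- The relation `~₂` on `K*` for `char K = 2`: `t ~₂ t'` iff `t + t' = x² + x`
for some `x ∈ K`. -/
def rel2F (t t' : RatFunc (ZMod 2)) : Prop :=
  ∃ x : RatFunc (ZMod 2), t + t' = x ^ 2 + x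

/-! If `X^a + X^b = x² + x` in `𝔽₂(X)`, then `x` is integral over the integrally closed ring
`𝔽₂[X]`, hence a polynomial `n`. But `n² + n` has even degree `2 deg n`, while for distinct odd
`a, b` the polynomial `X^a + X^b` has odd degree `max a b`. Since `~₂` is an equivalence relation,
the representatives of the classes of the `X^(2i+1)` in a system of representatives are pairwise
distinct, and `𝔽₂(X)` is countable. -/

open Polynomial

instance Polynomial.countable {R : Type*} [Semiring R] [Countable R] : Countable R[X] :=
  (AddMonoidAlgebra.coeff_injective.comp (toFinsuppIso R).injective).countable

instance RatFunc.countable {K : Type*} [Field K] [Countable K] : Countable (RatFunc K) :=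
  Function.Surjective.countable
    (f := fun p : K[X] × K[X] => algebraMap _ _ p.1 / algebraMap _ _ p.2)
    fun x => ⟨(x.num, x.denom), x.num_div_denom⟩

theorem Polynomial.natDegree_sq_add_self {R : Type*} [CommRing R] [NoZeroDivisors R] (p : R[X]) :
    (p ^ 2 + p).natDegree = 2 * p.natDegree := by
  rcases Nat.eq_zero_or_pos p.natDegree with h0 | hpos
  · obtain ⟨c, rfl⟩ := natDegree_eq_zero.mp h0
    rw [← C_pow, ← C_add, natDegree_C, natDegree_C]
  · rw [natDegree_add_eq_left_of_natDegree_lt (by rw [natDegree_pow]; omega), natDegree_pow]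

theorem Polynomial.odd_natDegree_X_pow_add_X_pow {R : Type*} [Semiring R] [Nontrivial R]
    {a b : ℕ} (ha : Odd a) (hb : Odd b) (hab : a ≠ b) :
    Odd ((X : R[X]) ^ a + X ^ b).natDegree := by
  rcases hab.lt_or_gt with h | h
  · rwa [natDegree_add_eq_right_of_natDegree_lt (by simpa), natDegree_X_pow]
  · rwa [natDegree_add_eq_left_of_natDegree_lt (by simpa), natDegree_X_pow]

theorem IsIntegrallyClosed.exists_algebraMap_eq_of_sq_add_self {R K : Type*} [CommRing R]
    [CommRing K] [Algebra R K] [IsFractionRing R K] [IsIntegrallyClosed R] {x : K} {p : R}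
    (h : x ^ 2 + x = algebraMap R K p) : ∃ y, algebraMap R K y = x :=
  IsIntegrallyClosed.algebraMap_eq_of_integral
    ⟨X ^ 2 + X - C p, by monicity!, by simp [h]⟩

theorem rel2F.symm {t t' : RatFunc (ZMod 2)} : rel2F t t' → rel2F t' t
  | ⟨x, hx⟩ => ⟨x, by rw [add_comm, hx]⟩

theorem rel2F.trans {t t' t'' : RatFunc (ZMod 2)} : rel2F t t' → rel2F t' t'' → rel2F t t''
  | ⟨x, hx⟩, ⟨y, hy⟩ => ⟨x + y, by
      rw [CharTwo.add_sq]
      linear_combination hx + hy - t' * CharTwo.two_eq_zero (R := RatFunc (ZMod 2))⟩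

theorem not_rel2F_X_pow {a b : ℕ} (ha : Odd a) (hb : Odd b) (hab : a ≠ b) :
    ¬ rel2F (RatFunc.X ^ a) (RatFunc.X ^ b) := by
  rintro ⟨x, hx⟩
  have hx' : x ^ 2 + x = algebraMap (ZMod 2)[X] _ (X ^ a + X ^ b) := by
    simp [hx]
  obtain ⟨n, rfl⟩ := IsIntegrallyClosed.exists_algebraMap_eq_of_sq_add_self hx'
  have hn : n ^ 2 + n = X ^ a + X ^ b := by
    apply IsFractionRing.injective (ZMod 2)[X] (RatFunc (ZMod 2))
    simpa using hx'
  have := odd_natDegree_X_pow_add_X_pow (R := ZMod 2) ha hb hab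
  rw [← hn, natDegree_sq_add_self] at this
  exact Nat.not_odd_iff_even.mpr (even_two_mul _) this

theorem rel2_ratfunc_odd_powers_not_equiv :
    (∀ i j : ℕ, i ≠ j →
      ¬ rel2F ((RatFunc.X : RatFunc (ZMod 2)) ^ (2 * i + 1))
          ((RatFunc.X : RatFunc (ZMod 2)) ^ (2 * j + 1))) ∧
    (∀ S : Set (RatFunc (ZMod 2)), (∀ s ∈ S, s ≠ 0) →
      (∀ t : RatFunc (ZMod 2), t ≠ 0 → ∃! s, s ∈ S ∧ rel2F t s) →
      S.Countable ∧ S.Infinite) := by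
  have odd_powers : ∀ i j : ℕ, i ≠ j →
      ¬ rel2F ((RatFunc.X : RatFunc (ZMod 2)) ^ (2 * i + 1))
          ((RatFunc.X : RatFunc (ZMod 2)) ^ (2 * j + 1)) := fun i j hij =>
    not_rel2F_X_pow (odd_two_mul_add_one i) (odd_two_mul_add_one j) (by omega)
  refine ⟨odd_powers, fun S _ hS => ⟨S.to_countable, ?_⟩⟩
  choose f hfS hf using fun i : ℕ => (hS _ (pow_ne_zero (2 * i + 1) RatFunc.X_ne_zero)).exists
  refine Set.infinite_of_injective_forall_mem (fun i j hij => ?_) hfS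
  by_contra hne
  exact odd_powers i j hne ((hf i).trans (hij ▸ (hf j).symm))
end

section
/- Let K be a field with char K = 2. Let H₂, H₃, H₄ ⊆ K* be sets such that every element of K* is ~₂-equivalent to exactly one element of H₂, ~₃-equivalent to exactly one element of H₃, and ~₄-equivalent to exactly one element of H₄. Consider the list of algebras: S(0,t,t,0,t,1) for t ∈ H₂; S(0,t,t,0,t,0) for t ∈ H₃; S(0,t,t,t,t,0) for t ∈ H₄; and S(0, t²/(1+t²), t/(1+t²), 1, t/(1+t²), 1) for t ∈ K* with t ≠ 1. Then: (1) every endo-commutative algebra S(0,q,a,b,c,d) over K with a ≠ 0 and c ≠ 0 is isomorphic to at least one algebra in this list; (2) any two algebras in the list with distinct parameter tuples (distinguishing the four families as well as distinct t) are non-isomorphic. -/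
/-- `t ~₂ t'` iff `t + t' = x² + x` for some `x ∈ K`. -/
def rel2 {K : Type*} [Field K] (t t' : K) : Prop := ∃ x : K, t + t' = x ^ 2 + x

/-- `t ~₃ t'` iff there exist `x ∈ K*` and `y ∈ K` with `t'x² + y² + t = 0`. -/
def rel3 {K : Type*} [Field K] (t t' : K) : Prop :=
  ∃ x : K, x ≠ 0 ∧ ∃ y : K, t' * x ^ 2 + y ^ 2 + t = 0

/-- `t ~₄ t'` iff `1/t + 1/t' = x² + x` for some `x ∈ K`. -/
def rel4 {K : Type*} [Field K] (t t' : K) : Prop :=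
  ∃ x : K, 1 / t + 1 / t' = x ^ 2 + x

/-- The parameter tuples appearing in the classification list of
Theorem 7.4 (`char K = 2`). -/
def InList2 {K : Type*} [Field K] (H₂ H₃ H₄ : Set K) (p q a b c d : K) : Prop :=
  (∃ t ∈ H₂, (p, q, a, b, c, d) = ((0 : K), t, t, 0, t, 1)) ∨
  (∃ t ∈ H₃, (p, q, a, b, c, d) = ((0 : K), t, t, 0, t, 0)) ∨
  (∃ t ∈ H₄, (p, q, a, b, c, d) = ((0 : K), t, t, t, t, 0)) ∨
  (∃ t : K, t ≠ 0 ∧ t ≠ 1 ∧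
      (p, q, a, b, c, d) =
        ((0 : K), t ^ 2 / (1 + t ^ 2), t / (1 + t ^ 2), 1, t / (1 + t ^ 2), 1))

/-! When `p = 0` and `c = a`, every square `u * u` in `S(0,q,a,b,a,d)` has `e`-coordinate
`2 a u₁ u₂ = 0`, so in characteristic 2 the squares span the line `K f`. Since `f = e * e`, an
isomorphism between two such algebras maps `f` into `K f`: it is lower triangular,
`e ↦ x e + z f`, `f ↦ w f`, and is encoded by a few polynomial equations in `x, z, w`.

Endo-commutativity forces `c = a` and leaves four cases (`q = a` with `b = 0` or `d = 0`, or
`b = d`); a diagonal rescaling `e ↦ λ e` puts each case into one of the four families, and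
within the first three families the equations in `x, z, w` are exactly `~₂`, `~₃`, `~₄`.
Different families are separated by the ratio `q / a` (equal to `1` on the first three
families and to `t` on the fourth) and by which of `b`, `d` vanish, since an isomorphism
multiplies both by `x` when `q = a`. -/

section

variable {K : Type*} [Field K]

theorem IsoS.trans {p q a b c d p' q' a' b' c' d' p'' q'' a'' b'' c'' d'' : K}
    (h : IsoS p q a b c d p' q' a' b' c' d')
    (h' : IsoS p' q' a' b' c' d' p'' q'' a'' b'' c'' d'') :
    IsoS p q a b c d p'' q'' a'' b'' c'' d'' := by
  obtain ⟨φ, hφ⟩ := h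
  obtain ⟨ψ, hψ⟩ := h'
  exact ⟨φ.trans ψ, fun u v => by simp [hφ, hψ]⟩

theorem mulS_basis (p q a b c d : K) :
    mulS p q a b c d (1, 0) (1, 0) = (0, 1) ∧ mulS p q a b c d (1, 0) (0, 1) = (a, b) ∧
      mulS p q a b c d (0, 1) (1, 0) = (c, d) ∧ mulS p q a b c d (0, 1) (0, 1) = (p, q) := by
  simp [mulS]

theorem map_prod_eq_smul_add_smul {M F : Type*} [AddCommMonoid M] [Module K M]
    [FunLike F (K × K) M] [LinearMapClass F K (K × K) M] (φ : F) (s t : K) :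
    φ (s, t) = s • φ (1, 0) + t • φ (0, 1) := by
  rw [← map_smul, ← map_smul, ← map_add]; simp

def lowerTriangularEquiv (x z w : K) (hx : x ≠ 0) (hw : w ≠ 0) : (K × K) ≃ₗ[K] (K × K) where
  toFun u := (x * u.1, z * u.1 + w * u.2)
  invFun u := (u.1 / x, (u.2 - z * u.1 / x) / w)
  map_add' u v := by ext <;> dsimp <;> ring
  map_smul' r u := by ext <;> dsimp <;> ring
  left_inv u := by ext <;> dsimp <;> field_simp; ring
  right_inv u := by ext <;> dsimp <;> field_simp; ring

theorem LinearEquiv.exists_lowerTriangular {φ : (K × K) ≃ₗ[K] (K × K)}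
    (hf : (φ (0, 1)).1 = 0) :
    ∃ x z w : K, x ≠ 0 ∧ w ≠ 0 ∧ ∀ s t : K, φ (s, t) = (x * s, z * s + w * t) := by
  have hφ : ∀ s t : K,
      φ (s, t) = ((φ (1, 0)).1 * s, (φ (1, 0)).2 * s + (φ (0, 1)).2 * t) := by
    intro s t
    rw [map_prod_eq_smul_add_smul φ]
    simp [hf, Prod.ext_iff, mul_comm]
  refine ⟨_, _, _, fun hx => ?_, fun hw => ?_, hφ⟩
  · obtain ⟨u, hu⟩ := φ.surjective (1, 0)
    rw [← Prod.mk.eta (p := u), hφ, hx] at hu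
    simp at hu
  · have := φ.injective (show φ (0, 1) = φ 0 by rw [hφ, hw, map_zero]; simp)
    simp at this

theorem familyIV_q_eq (t : K) : t ^ 2 / (1 + t ^ 2) = t * (t / (1 + t ^ 2)) := by ring

variable [CharP K 2]

theorem mulS_self_fst (q a b d : K) (u : K × K) : (mulS 0 q a b a d u u).1 = 0 := by
  simp only [mulS]; linear_combination u.1 * u.2 * a * CharTwo.two_eq_zero (R := K)

theorem isoS_iff_s12 {q₁ a₁ b₁ d₁ q₂ a₂ b₂ d₂ : K} :
    IsoS 0 q₁ a₁ b₁ a₁ d₁ 0 q₂ a₂ b₂ a₂ d₂ ↔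
      ∃ x z w : K, x ≠ 0 ∧ w ≠ 0 ∧ a₁ = a₂ * w ∧ q₁ = q₂ * w ∧
        w = x ^ 2 + x * z * (b₂ + d₂) + z ^ 2 * q₂ ∧
        a₁ * z + b₁ * w = (b₂ * x + q₂ * z) * w ∧ a₁ * z + d₁ * w = (d₂ * x + q₂ * z) * w := by
  constructor
  · rintro ⟨φ, hφ⟩
    obtain ⟨ee, ef, fe, ff⟩ := mulS_basis (0 : K) q₁ a₁ b₁ a₁ d₁
    have hf : (φ (0, 1)).1 = 0 := by rw [← ee, hφ]; exact mulS_self_fst _ _ _ _ _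
    obtain ⟨x, z, w, hx, hw, hφ'⟩ := φ.exists_lowerTriangular hf
    have hee := hφ (1, 0) (1, 0)
    have hef := hφ (1, 0) (0, 1)
    have hfe := hφ (0, 1) (1, 0)
    have hff := hφ (0, 1) (0, 1)
    rw [ee, hφ', hφ'] at hee
    rw [ef, hφ', hφ', hφ'] at hef
    rw [fe, hφ', hφ', hφ'] at hfe
    rw [ff, hφ', hφ'] at hff
    simp only [mulS, Prod.mk.injEq] at hee hef hfe hff
    refine ⟨x, z, w, hx, hw, mul_left_cancel₀ hx ?_, mul_left_cancel₀ hw ?_, ?_, ?_, ?_⟩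
    · linear_combination hef.1
    · linear_combination hff.2
    · linear_combination hee.2
    · linear_combination hef.2
    · linear_combination hfe.2
  · rintro ⟨x, z, w, hx, hw, ha, hq, hw', hb, hd⟩
    refine ⟨lowerTriangularEquiv x z w hx hw, fun u v => ?_⟩
    have h2 : (2 : K) = 0 := CharTwo.two_eq_zero
    simp only [lowerTriangularEquiv, mulS, LinearEquiv.coe_mk, LinearMap.coe_mk, AddHom.coe_mk,
      Prod.mk.injEq]
    constructor
    · linear_combination (x * (u.1 * v.2 + u.2 * v.1)) * ha - (a₂ * x * z * u.1 * v.1) * h2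
    · linear_combination (u.1 * v.1) * hw' + (u.1 * v.2) * hb + (u.2 * v.1) * hd +
        (w * u.2 * v.2) * hq

theorem isoS_of_rescale {q a b d q' a' b' d' l : K} (hl : l ≠ 0) (hq : q = q' * l ^ 2)
    (ha : a = a' * l ^ 2) (hb : b = b' * l) (hd : d = d' * l) :
    IsoS 0 q a b a d 0 q' a' b' a' d' :=
  isoS_iff_s12.2 ⟨l, 0, l ^ 2, hl, pow_ne_zero 2 hl, ha, hq, by ring, by rw [hb]; ring,
    by rw [hd]; ring⟩

section

variable {q₁ a₁ b₁ d₁ q₂ a₂ b₂ d₂ : K}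

theorem IsoS.ratio_eq {r₁ r₂ : K} (h : IsoS 0 q₁ a₁ b₁ a₁ d₁ 0 q₂ a₂ b₂ a₂ d₂)
    (hq₁ : q₁ = r₁ * a₁) (hq₂ : q₂ = r₂ * a₂) (ha₁ : a₁ ≠ 0) : r₁ = r₂ := by
  obtain ⟨x, z, w, -, -, ha, hq, -⟩ := isoS_iff_s12.1 h
  exact mul_right_cancel₀ ha₁ (by linear_combination hq - hq₁ + w * hq₂ - r₂ * ha)

theorem IsoS.eq_zero_iff (h : IsoS 0 q₁ a₁ b₁ a₁ d₁ 0 a₂ a₂ b₂ a₂ d₂) :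
    (b₁ = 0 ↔ b₂ = 0) ∧ (d₁ = 0 ↔ d₂ = 0) := by
  obtain ⟨x, z, w, hx, hw, ha, -, -, hb, hd⟩ := isoS_iff_s12.1 h
  have hb' : b₁ = x * b₂ := mul_right_cancel₀ hw (by linear_combination hb - z * ha)
  have hd' : d₁ = x * d₂ := mul_right_cancel₀ hw (by linear_combination hd - z * ha)
  simp [hb', hd', hx]

end

section

variable {t s : K}

theorem isoS_familyI_iff (ht : t ≠ 0) (hs : s ≠ 0) :
    IsoS 0 t t 0 t 1 0 s s 0 s 1 ↔ rel2 t s := by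
  have h2 : (2 : K) = 0 := CharTwo.two_eq_zero
  constructor
  · intro h
    obtain ⟨x, z, w, -, hw, ha, -, hw', -, hd⟩ := isoS_iff_s12.1 h
    have hx : x = 1 := mul_right_cancel₀ hw (by linear_combination z * ha - hd)
    exact ⟨z * s, by linear_combination ha + s * hw' + s * (1 + z + x) * hx + s * h2⟩
  · rintro ⟨X, hX⟩
    refine isoS_iff_s12.2 ⟨1, X / s, t / s, one_ne_zero, div_ne_zero ht hs, ?_, ?_, ?_, ?_, ?_⟩ <;>
      field_simp
    · linear_combination hX - s * h2
    all_goals ring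

theorem isoS_familyII_iff (ht : t ≠ 0) (hs : s ≠ 0) :
    IsoS 0 t t 0 t 0 0 s s 0 s 0 ↔ rel3 t s := by
  have h2 : (2 : K) = 0 := CharTwo.two_eq_zero
  constructor
  · intro h
    obtain ⟨x, z, w, hx, -, ha, -, hw', -⟩ := isoS_iff_s12.1 h
    exact ⟨x, hx, z * s,
      by linear_combination ha + s * hw' + (s * x ^ 2 + s ^ 2 * z ^ 2) * h2⟩
  · rintro ⟨X, hX, Y, hXY⟩
    refine isoS_iff_s12.2 ⟨X, Y / s, t / s, hX, div_ne_zero ht hs, ?_, ?_, ?_, ?_, ?_⟩ <;>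
      field_simp
    · linear_combination -hXY + t * h2
    all_goals ring

theorem isoS_familyIII_iff (ht : t ≠ 0) (hs : s ≠ 0) :
    IsoS 0 t t t t 0 0 s s s s 0 ↔ rel4 t s := by
  have h2 : (2 : K) = 0 := CharTwo.two_eq_zero
  constructor
  · intro h
    obtain ⟨x, z, w, hx, hw, ha, -, hw', hb, -⟩ := isoS_iff_s12.1 h
    have hsx : t = s * x := mul_right_cancel₀ hw (by linear_combination hb - z * ha)
    have hwx : w = x := mul_left_cancel₀ hs (by linear_combination -ha + hsx)
    refine ⟨z / x, ?_⟩
    rw [hsx]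
    field_simp
    linear_combination hw' - hwx + x ^ 2 * h2
  · rintro ⟨X, hX⟩
    have key : s + t = s * t * X ^ 2 + s * t * X := by
      field_simp at hX
      linear_combination hX
    refine isoS_iff_s12.2 ⟨t / s, X * t / s, t / s, div_ne_zero ht hs, div_ne_zero ht hs,
      ?_, ?_, ?_, ?_, ?_⟩ <;> field_simp
    · linear_combination key - t * h2
    all_goals ring

end

section

variable {q a b c d : K}

theorem EndoComm.eqns (h : EndoComm 0 q a b c d) :
    c = a ∧ q ^ 2 = a ^ 2 + (b + d) * a * b + q * b ^ 2 ∧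
      q ^ 2 = a ^ 2 + (b + d) * a * d + q * d ^ 2 := by
  have h2 : (2 : K) = 0 := CharTwo.two_eq_zero
  have h₁ := h (1, 1) (1, 0)
  have h₂ := h (0, 1) (1, 0)
  have h₃ := h (1, 0) (0, 1)
  simp only [mulS, Prod.mk.injEq] at h₁ h₂ h₃
  norm_num at h₁ h₂ h₃
  have hca : c = a := CharTwo.sq_inj.1 (by linear_combination h₂.1 - h₁.1)
  subst hca
  refine ⟨rfl, ?_, ?_⟩
  · linear_combination h₃.2
  · linear_combination h₂.2

theorem EndoComm.cases (ha : a ≠ 0) (h : EndoComm 0 q a b c d) :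
    c = a ∧ (q = a ∧ b = 0 ∧ d ≠ 0 ∨ q = a ∧ b = 0 ∧ d = 0 ∨ q = a ∧ b ≠ 0 ∧ d = 0 ∨
      b = d ∧ b ≠ 0 ∧ a ^ 2 = q ^ 2 + q * b ^ 2) := by
  have h2 : (2 : K) = 0 := CharTwo.two_eq_zero
  obtain ⟨hca, hb, hd⟩ := h.eqns
  refine ⟨hca, ?_⟩
  by_cases hbd : b = d
  · subst hbd
    have hq : a ^ 2 = q ^ 2 + q * b ^ 2 := by
      linear_combination -hb - (a * b ^ 2 + q * b ^ 2) * h2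
    by_cases hb0 : b = 0
    · subst hb0
      exact Or.inr (Or.inl ⟨(CharTwo.sq_inj.1 (by simpa using hq)).symm, rfl, rfl⟩)
    · exact Or.inr (Or.inr (Or.inr ⟨rfl, hb0, hq⟩))
  · have hqa : q = a := by
      have : (b + d) ^ 2 * (q + a) = 0 := by
        linear_combination hb - hd + (b + d) * b * (q + a) * h2
      exact CharTwo.add_eq_zero.1 ((mul_eq_zero.1 this).resolve_left
        (pow_ne_zero 2 fun h0 => hbd (CharTwo.add_eq_zero.1 h0)))
    subst hqa
    have : q * b * d = 0 := by linear_combination -hb - q * b ^ 2 * h2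
    rcases mul_eq_zero.1 this with hqb | hd0
    · have hb0 : b = 0 := (mul_eq_zero.1 hqb).resolve_left ha
      exact Or.inl ⟨rfl, hb0, fun hd0 => hbd (hb0.trans hd0.symm)⟩
    · exact Or.inr (Or.inr (Or.inl ⟨rfl, fun hb0 => hbd (hb0.trans hd0.symm), hd0⟩))

end

theorem rel2_refl (t : K) : rel2 t t := ⟨0, by simp [CharTwo.add_self_eq_zero]⟩

theorem rel3_refl (t : K) : rel3 t t :=
  ⟨1, one_ne_zero, 0, by linear_combination t * CharTwo.two_eq_zero (R := K)⟩

theorem rel4_refl (t : K) : rel4 t t := ⟨0, by simp [CharTwo.add_self_eq_zero]⟩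

theorem one_add_sq_ne_zero {t : K} (ht : t ≠ 1) : 1 + t ^ 2 ≠ 0 := fun h =>
  ht (CharTwo.sq_inj.1 (by linear_combination h - CharTwo.two_eq_zero (R := K)))

theorem familyIV_a_ne_zero {t : K} (ht0 : t ≠ 0) (ht1 : t ≠ 1) : t / (1 + t ^ 2) ≠ 0 :=
  div_ne_zero ht0 (one_add_sq_ne_zero ht1)

theorem exists_isoS_familyIV {q a b : K} (ha : a ≠ 0) (hb : b ≠ 0)
    (h : a ^ 2 = q ^ 2 + q * b ^ 2) : ∃ t : K, t ≠ 0 ∧ t ≠ 1 ∧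
      IsoS 0 q a b a b 0 (t ^ 2 / (1 + t ^ 2)) (t / (1 + t ^ 2)) 1 (t / (1 + t ^ 2)) 1 := by
  have h2 : (2 : K) = 0 := CharTwo.two_eq_zero
  have hq : q ≠ 0 := by
    rintro rfl
    exact ha (pow_eq_zero_iff two_ne_zero |>.1 (by simpa using h))
  have hqa : q ≠ a := by
    rintro rfl
    exact mul_ne_zero hq (pow_ne_zero 2 hb) (by linear_combination -h)
  have ht1 : q / a ≠ 1 := fun h1 => hqa ((div_eq_one_iff_eq ha).1 h1)
  have hden : 1 + (q / a) ^ 2 ≠ 0 := one_add_sq_ne_zero ht1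
  have hsum : a ^ 2 + q ^ 2 = q * b ^ 2 := by linear_combination h + q ^ 2 * h2
  refine ⟨q / a, div_ne_zero hq ha, ht1,
    isoS_of_rescale hb ?_ ?_ (one_mul b).symm (one_mul b).symm⟩ <;>
  · field_simp
    rw [hsum, div_self (mul_ne_zero hq (pow_ne_zero 2 hb))]

theorem exists_inList2_isoS_of_endoComm {H₂ H₃ H₄ : Set K}
    (hH₂0 : ∀ s ∈ H₂, s ≠ 0) (hH₃0 : ∀ s ∈ H₃, s ≠ 0) (hH₄0 : ∀ s ∈ H₄, s ≠ 0)
    (hH₂ : ∀ t : K, t ≠ 0 → ∃ s ∈ H₂, rel2 t s) (hH₃ : ∀ t : K, t ≠ 0 → ∃ s ∈ H₃, rel3 t s)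
    (hH₄ : ∀ t : K, t ≠ 0 → ∃ s ∈ H₄, rel4 t s) {q a b c d : K} (ha : a ≠ 0)
    (h : EndoComm 0 q a b c d) :
    ∃ p' q' a' b' c' d' : K, InList2 H₂ H₃ H₄ p' q' a' b' c' d' ∧
      IsoS 0 q a b c d p' q' a' b' c' d' := by
  obtain ⟨rfl, ⟨rfl, rfl, hd⟩ | ⟨rfl, rfl, rfl⟩ | ⟨rfl, hb, rfl⟩ | ⟨rfl, hb, hsq⟩⟩ := h.cases ha
  · have ht : q / d ^ 2 ≠ 0 := div_ne_zero ha (pow_ne_zero 2 hd)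
    obtain ⟨s, hs, hrel⟩ := hH₂ _ ht
    refine ⟨0, s, s, 0, s, 1, Or.inl ⟨s, hs, rfl⟩,
      .trans ?_ ((isoS_familyI_iff ht (hH₂0 s hs)).2 hrel)⟩
    exact isoS_of_rescale hd (by field_simp) (by field_simp) (by ring) (by ring)
  · obtain ⟨s, hs, hrel⟩ := hH₃ q ha
    exact ⟨0, s, s, 0, s, 0, Or.inr (Or.inl ⟨s, hs, rfl⟩),
      (isoS_familyII_iff ha (hH₃0 s hs)).2 hrel⟩
  · have ht : b ^ 2 / q ≠ 0 := div_ne_zero (pow_ne_zero 2 hb) ha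
    obtain ⟨s, hs, hrel⟩ := hH₄ _ ht
    refine ⟨0, s, s, s, s, 0, Or.inr (Or.inr (Or.inl ⟨s, hs, rfl⟩)),
      .trans ?_ ((isoS_familyIII_iff ht (hH₄0 s hs)).2 hrel)⟩
    exact isoS_of_rescale (div_ne_zero ha hb) (by field_simp) (by field_simp) (by field_simp)
      (by ring)
  · obtain ⟨t, ht0, ht1, hiso⟩ := exists_isoS_familyIV ha hb hsq
    exact ⟨_, _, _, _, _, _, Or.inr (Or.inr (Or.inr ⟨t, ht0, ht1, rfl⟩)), hiso⟩

theorem InList2.eq_of_isoS {H₂ H₃ H₄ : Set K}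
    (hH₂0 : ∀ s ∈ H₂, s ≠ 0) (hH₃0 : ∀ s ∈ H₃, s ≠ 0) (hH₄0 : ∀ s ∈ H₄, s ≠ 0)
    (hH₂ : ∀ t : K, t ≠ 0 → ∃! s, s ∈ H₂ ∧ rel2 t s)
    (hH₃ : ∀ t : K, t ≠ 0 → ∃! s, s ∈ H₃ ∧ rel3 t s)
    (hH₄ : ∀ t : K, t ≠ 0 → ∃! s, s ∈ H₄ ∧ rel4 t s)
    {p₁ q₁ a₁ b₁ c₁ d₁ p₂ q₂ a₂ b₂ c₂ d₂ : K} (h₁ : InList2 H₂ H₃ H₄ p₁ q₁ a₁ b₁ c₁ d₁)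
    (h₂ : InList2 H₂ H₃ H₄ p₂ q₂ a₂ b₂ c₂ d₂)
    (h : IsoS p₁ q₁ a₁ b₁ c₁ d₁ p₂ q₂ a₂ b₂ c₂ d₂) :
    (p₁, q₁, a₁, b₁, c₁, d₁) = (p₂, q₂, a₂, b₂, c₂, d₂) := by
  rcases h₁ with ⟨t, ht, he₁⟩ | ⟨t, ht, he₁⟩ | ⟨t, ht, he₁⟩ | ⟨t, ht0, ht1, he₁⟩ <;>
  rcases h₂ with ⟨s, hs, he₂⟩ | ⟨s, hs, he₂⟩ | ⟨s, hs, he₂⟩ | ⟨s, -, hs1, he₂⟩ <;>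
  rw [eq_comm] at he₁ he₂ <;> simp only [Prod.mk.injEq] at he₁ he₂ <;>
  obtain ⟨rfl, rfl, rfl, rfl, rfl, rfl⟩ := he₁ <;> obtain ⟨rfl, rfl, rfl, rfl, rfl, rfl⟩ := he₂
  · rw [(hH₂ t (hH₂0 t ht)).unique ⟨ht, rel2_refl t⟩
      ⟨hs, (isoS_familyI_iff (hH₂0 t ht) (hH₂0 s hs)).1 h⟩]
  · simpa using h.eq_zero_iff.2
  · exact absurd (h.eq_zero_iff.1.1 rfl) (hH₄0 s hs)
  · exact absurd (h.ratio_eq (one_mul t).symm (familyIV_q_eq s) (hH₂0 t ht)) hs1.symm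
  · simpa using h.eq_zero_iff.2
  · rw [(hH₃ t (hH₃0 t ht)).unique ⟨ht, rel3_refl t⟩
      ⟨hs, (isoS_familyII_iff (hH₃0 t ht) (hH₃0 s hs)).1 h⟩]
  · exact absurd (h.eq_zero_iff.1.1 rfl) (hH₄0 s hs)
  · exact absurd (h.ratio_eq (one_mul t).symm (familyIV_q_eq s) (hH₃0 t ht)) hs1.symm
  · exact absurd (h.eq_zero_iff.1.2 rfl) (hH₄0 t ht)
  · exact absurd (h.eq_zero_iff.1.2 rfl) (hH₄0 t ht)
  · rw [(hH₄ t (hH₄0 t ht)).unique ⟨ht, rel4_refl t⟩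
      ⟨hs, (isoS_familyIII_iff (hH₄0 t ht) (hH₄0 s hs)).1 h⟩]
  · exact absurd (h.ratio_eq (one_mul t).symm (familyIV_q_eq s) (hH₄0 t ht)) hs1.symm
  · exact absurd (h.ratio_eq (familyIV_q_eq t) (one_mul s).symm (familyIV_a_ne_zero ht0 ht1)) ht1
  · exact absurd (h.ratio_eq (familyIV_q_eq t) (one_mul s).symm (familyIV_a_ne_zero ht0 ht1)) ht1
  · exact absurd (h.ratio_eq (familyIV_q_eq t) (one_mul s).symm (familyIV_a_ne_zero ht0 ht1)) ht1
  · obtain rfl := h.ratio_eq (familyIV_q_eq t) (familyIV_q_eq s) (familyIV_a_ne_zero ht0 ht1)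
    rfl

end

theorem classification_II1_char_two {K : Type*} [Field K] [CharP K 2]
    (H₂ H₃ H₄ : Set K)
    (hH₂0 : ∀ s ∈ H₂, s ≠ 0) (hH₃0 : ∀ s ∈ H₃, s ≠ 0) (hH₄0 : ∀ s ∈ H₄, s ≠ 0)
    (hH₂ : ∀ t : K, t ≠ 0 → ∃! s, s ∈ H₂ ∧ rel2 t s)
    (hH₃ : ∀ t : K, t ≠ 0 → ∃! s, s ∈ H₃ ∧ rel3 t s)
    (hH₄ : ∀ t : K, t ≠ 0 → ∃! s, s ∈ H₄ ∧ rel4 t s) :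
    (∀ q a b c d : K, a ≠ 0 → c ≠ 0 → EndoComm 0 q a b c d →
        ∃ p' q' a' b' c' d' : K, InList2 H₂ H₃ H₄ p' q' a' b' c' d' ∧
          IsoS 0 q a b c d p' q' a' b' c' d') ∧
    (∀ p₁ q₁ a₁ b₁ c₁ d₁ p₂ q₂ a₂ b₂ c₂ d₂ : K,
        InList2 H₂ H₃ H₄ p₁ q₁ a₁ b₁ c₁ d₁ → InList2 H₂ H₃ H₄ p₂ q₂ a₂ b₂ c₂ d₂ →
        (p₁, q₁, a₁, b₁, c₁, d₁) ≠ (p₂, q₂, a₂, b₂, c₂, d₂) →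
        ¬ IsoS p₁ q₁ a₁ b₁ c₁ d₁ p₂ q₂ a₂ b₂ c₂ d₂) := by
  refine ⟨fun q a b c d ha _ h => ?_, fun _ _ _ _ _ _ _ _ _ _ _ _ h₁ h₂ hne h => ?_⟩
  · exact exists_inList2_isoS_of_endoComm hH₂0 hH₃0 hH₄0 (fun t ht => (hH₂ t ht).exists)
      (fun t ht => (hH₃ t ht).exists) (fun t ht => (hH₄ t ht).exists) ha h
  · exact hne (InList2.eq_of_isoS hH₂0 hH₃0 hH₄0 hH₂ hH₃ hH₄ h₁ h₂ h)
end

section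
/- Let K be a field with char K ≠ 2, let a, a' ∈ K* and ε, δ, ε', δ' ∈ {1, −1}. Then the algebras S(0, εa, a, 0, δa, 0) and S(0, ε'a', a', 0, δ'a', 0) are isomorphic if and only if ε = ε', δ = δ', and a/a' is the square of a nonzero element of K. -/
theorem iso_II1_12_iff {K : Type*} [Field K] (h2 : (2 : K) ≠ 0)
    (a a' ε δ ε' δ' : K) (ha : a ≠ 0) (ha' : a' ≠ 0)
    (hε : ε = 1 ∨ ε = -1) (hδ : δ = 1 ∨ δ = -1)
    (hε' : ε' = 1 ∨ ε' = -1) (hδ' : δ' = 1 ∨ δ' = -1) :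
    IsoS 0 (ε * a) a 0 (δ * a) 0 0 (ε' * a') a' 0 (δ' * a') 0 ↔
      (ε = ε' ∧ δ = δ' ∧ ∃ k : K, k ≠ 0 ∧ a / a' = k ^ 2) := by
  constructor
  · rintro ⟨φ, hφ⟩
    obtain ⟨α, γ, hP⟩ : ∃ x y : K, φ (1, 0) = (x, y) := ⟨_, _, rfl⟩
    obtain ⟨β, η, hQ⟩ : ∃ x y : K, φ (0, 1) = (x, y) := ⟨_, _, rfl⟩
    have key : ∀ x y : K, φ (x, y) = (x * α + y * β, x * γ + y * η) := by
      intro x y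
      have hxy : ((x, y) : K × K) = x • ((1 : K), (0 : K)) + y • ((0 : K), (1 : K)) := by
        simp [Prod.ext_iff]
      rw [hxy, map_add, map_smul, map_smul, hP, hQ]
      simp [Prod.ext_iff, mul_comm]
    have hdet : α * η - γ * β ≠ 0 := by
      intro h0
      have z1 : ((η, -γ) : K × K) = 0 := by
        apply φ.injective
        rw [key, map_zero]
        have c1 : η * α + -γ * β = 0 := by linear_combination h0
        have c2 : η * γ + -γ * η = 0 := by ring
        exact Prod.ext (by simpa using c1) (by simpa using c2)
      have z2 : ((β, -α) : K × K) = 0 := by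
        apply φ.injective
        rw [key, map_zero]
        have c1 : β * α + -α * β = 0 := by ring
        have c2 : β * γ + -α * η = 0 := by linear_combination -h0
        exact Prod.ext (by simpa using c1) (by simpa using c2)
      have hγ0 : γ = 0 := by simpa using congrArg Prod.snd z1
      have hα0 : α = 0 := by simpa using congrArg Prod.snd z2
      have hφ0 : φ (1, 0) = 0 := by rw [hP, hα0, hγ0]; rfl
      have h10 : ((1 : K), (0 : K)) = (0 : K × K) :=
        φ.injective (by rw [hφ0, map_zero])
      exact (one_ne_zero : (1 : K) ≠ 0) (by simpa using congrArg Prod.fst h10)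
    have h11 := hφ (1, 0) (1, 0)
    have h12 := hφ (1, 0) (0, 1)
    have h21 := hφ (0, 1) (1, 0)
    have h22 := hφ (0, 1) (0, 1)
    rw [hP] at h11 h12 h21
    rw [hQ] at h12 h21 h22
    simp only [mulS] at h11 h12 h21 h22
    norm_num at h11 h12 h21 h22
    rw [key] at h11 h12 h21 h22
    rw [Prod.mk.injEq] at h11 h12 h21 h22
    obtain ⟨E1, E2⟩ := h11
    obtain ⟨E3, E4⟩ := h12
    obtain ⟨E5, E6⟩ := h21
    obtain ⟨E7, E8⟩ := h22
    by_cases hg : γ = 0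
    · subst hg
      have hb : β = 0 := by linear_combination E1
      subst hb
      have hα : α ≠ 0 := by
        intro h
        exact hdet (by rw [h]; ring)
      have hη : η ≠ 0 := by
        intro h
        exact hdet (by rw [h]; ring)
      have haη : a = a' * η := by
        have h' : α * a = α * (a' * η) := by linear_combination E3
        exact mul_left_cancel₀ hα h'
      have hδδ' : δ = δ' := by
        have h' : (a * α) * δ = (a * α) * δ' := by linear_combination E5 - α * δ' * haη
        exact mul_left_cancel₀ (mul_ne_zero ha hα) h'
      have hεε' : ε = ε' := by
        have h' : (a * η) * ε = (a * η) * ε' := by linear_combination E8 - η * ε' * haη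
        exact mul_left_cancel₀ (mul_ne_zero ha hη) h'
      refine ⟨hεε', hδδ', α, hα, ?_⟩
      rw [div_eq_iff ha']
      linear_combination haη + a' * E2
    · have h0 : γ * (δ - 1) = 0 := by
        have h0' : γ * (δ - 1) * a = 0 := by linear_combination E6 - E4
        rcases mul_eq_zero.mp h0' with h | h
        · exact h
        · exact absurd h ha
      have hδ1 : δ = 1 := by
        rcases mul_eq_zero.mp h0 with h | h
        · exact absurd h hg
        · exact sub_eq_zero.mp h
      subst hδ1
      rcases hδ' with hd' | hd' <;> subst hd'
      · -- δ' = 1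
        have hα : α ≠ 0 := by
          intro h
          have hb : β = 0 := by rw [h] at E1; simpa using E1
          exact hdet (by rw [h, hb]; ring)
        have hβ : β ≠ 0 := by
          intro h
          have h' : (2 * a') * (α * γ) = (2 * a') * 0 := by linear_combination h - E1
          rcases mul_eq_zero.mp (by simpa using mul_left_cancel₀ (mul_ne_zero h2 ha') h' :
              α * γ = 0) with h'' | h''
          · exact hα h''
          · exact hg h''
        have hstar : ε * a = 2 * a' * η := by
          have h' : β * (ε * a) = β * (2 * a' * η) := by linear_combination E7
          exact mul_left_cancel₀ hβ h'
        have hi : a = a' * η + 2 * a' ^ 2 * γ ^ 2 := by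
          have h' : α * a = α * (a' * η + 2 * a' ^ 2 * γ ^ 2) := by
            linear_combination E3 + a' * γ * E1
          exact mul_left_cancel₀ hα h'
        rcases hε' with he' | he' <;> subst he'
        · -- ε' = 1 : contradiction via det = 0
          have hii : a = 2 * a' * α ^ 2 + a' * η := by
            have h' : γ * a = γ * (2 * a' * α ^ 2 + a' * η) := by
              linear_combination E4 + α * E1
            exact mul_left_cancel₀ hg h'
          have hsq : a' * γ ^ 2 = α ^ 2 := by
            have h' : (2 * a') * (a' * γ ^ 2) = (2 * a') * α ^ 2 := by
              linear_combination hii - hi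
            exact mul_left_cancel₀ (mul_ne_zero h2 ha') h'
          exact absurd (show α * η - γ * β = 0 by
            linear_combination α * E2 - γ * E1 - α * hsq) hdet
        · -- ε' = -1
          rcases hε with he | he <;> subst he
          · -- ε = 1 : contradiction via det = 0
            have hQ2 : η = 2 * a' * γ ^ 2 := by
              have h' : a' * η = a' * (2 * a' * γ ^ 2) := by linear_combination hi - hstar
              exact mul_left_cancel₀ ha' h'
            exact absurd (show α * η - γ * β = 0 by
              linear_combination α * hQ2 - γ * E1) hdet
          · -- ε = -1 : the real case
            refine ⟨rfl, rfl, 2 * α, mul_ne_zero h2 hα, ?_⟩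
            have hQ2 : η = -2 * α ^ 2 := by
              have h' : a' * η = a' * (-2 * α ^ 2) := by
                linear_combination (-1 : K) * hstar + (-1 : K) * hi + (-2 * a') * E2
              exact mul_left_cancel₀ ha' h'
            have haf : a = 4 * a' * α ^ 2 := by
              linear_combination -hstar - 2 * a' * hQ2
            rw [div_eq_iff ha']
            linear_combination haf
      · -- δ' = -1 : contradiction
        have hα0 : α = 0 := by
          have h' : (2 * a) * α = (2 * a) * 0 := by linear_combination E3 + E5
          exact mul_left_cancel₀ (mul_ne_zero h2 ha) h'
        have hβ0 : β = 0 := by linear_combination E1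
        exact absurd (show α * η - γ * β = 0 by rw [hα0, hβ0]; ring) hdet
  · rintro ⟨hee, hdd, k, hk0, hk⟩
    subst hee
    subst hdd
    have haa : a = k ^ 2 * a' := (div_eq_iff ha').mp hk
    subst haa
    refine ⟨⟨⟨⟨fun x => (k * x.1, k ^ 2 * x.2), ?_⟩, ?_⟩,
      fun x => (k⁻¹ * x.1, (k ^ 2)⁻¹ * x.2), ?_, ?_⟩, ?_⟩
    · intro x y
      simp [Prod.ext_iff]
      constructor <;> ring
    · intro c x
      simp [Prod.ext_iff, smul_eq_mul]
      constructor <;> ring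
    · intro x
      have hk2 : (k : K) ^ 2 ≠ 0 := pow_ne_zero _ hk0
      refine Prod.ext ?_ ?_ <;> simp <;> field_simp
    · intro x
      have hk2 : (k : K) ^ 2 ≠ 0 := pow_ne_zero _ hk0
      refine Prod.ext ?_ ?_ <;> simp <;> field_simp
    · intro u v
      simp only [mulS, LinearEquiv.coe_mk, LinearMap.coe_mk, AddHom.coe_mk]
      rw [Prod.mk.injEq]
      constructor <;> ring
end

section
/- Let K be a field with char K = 2 and let t, t' ∈ K*. Then the algebras S(0, t, t, 0, t, 1) and S(0, t', t', 0, t', 1) are isomorphic if and only if t + t' = x² + x for some x ∈ K. -/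
/-!
An isomorphism `φ : S_t → S_{t'}` (where `S_t = S(0,t,t,0,t,1)`) is determined by
`φ e = (1, β)` and `φ f = (0, δ)`: in characteristic `2` the square `φ e * φ e = φ f` has zero
`e`-component, and then `φ f * φ f = t φ f`, `φ f * φ e = t φ e + φ f` force `t = t' δ`, `φ e = (1, β)`
and `δ = 1 + β + t' β²`. With `x = t' β` this says `t = t' + x + x²`. Conversely every such pair
`(β, δ)` with `δ ≠ 0` defines an isomorphism `(u₁, u₂) ↦ (u₁, β u₁ + δ u₂)`.
-/

section

variable {K : Type*} [Field K]

theorem mulS_II1_11 (q : K) (u v : K × K) :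
    mulS 0 q q 0 q 1 u v = (q * (u.1 * v.2 + u.2 * v.1), u.1 * v.1 + u.2 * v.1 + q * u.2 * v.2) := by
  simp only [mulS]
  ext <;> ring

theorem add_eq_sq_add_of_mulS_II1_11 [CharP K 2] {t t' : K} {A B : K × K} (hB : B ≠ 0)
    (hAA : mulS 0 t' t' 0 t' 1 A A = B) (hBB : mulS 0 t' t' 0 t' 1 B B = t • B)
    (hBA : mulS 0 t' t' 0 t' 1 B A = t • A + B) :
    t + t' = (t' * A.2) ^ 2 + t' * A.2 := by
  have h2 := CharTwo.two_eq_zero (R := K)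
  simp only [mulS_II1_11, Prod.ext_iff, Prod.smul_fst, Prod.smul_snd, Prod.fst_add,
    Prod.snd_add, smul_eq_mul] at hAA hBB hBA
  have hB₁ : B.1 = 0 := by linear_combination -hAA.1 + t' * A.1 * A.2 * h2
  have hB₂ : B.2 ≠ 0 := fun h => hB (Prod.ext hB₁ h)
  have ht : t = t' * B.2 := mul_left_cancel₀ hB₂ <| by
    linear_combination -hBB.2 + (B.1 + B.2) * hB₁
  have hA₁ : A.1 = 1 := mul_left_cancel₀ hB₂ <| by
    linear_combination hBA.2 - A.1 * hB₁ + A.2 * ht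
  linear_combination ht - t' * hAA.2 + t' * (A.1 + A.2 + 1) * hA₁ + t' * h2

def shearEquiv (β δ : K) (hδ : δ ≠ 0) : (K × K) ≃ₗ[K] (K × K) :=
  (LinearEquiv.refl K K).skewProd (LinearEquiv.smulOfNeZero K K δ hδ) (β • LinearMap.id)

theorem shearEquiv_apply (β δ : K) (hδ : δ ≠ 0) (u : K × K) :
    shearEquiv β δ hδ u = (u.1, β * u.1 + δ * u.2) := by
  simp only [shearEquiv, LinearEquiv.skewProd_apply, LinearEquiv.refl_apply,
    LinearEquiv.smulOfNeZero_apply, LinearMap.smul_apply, LinearMap.id_apply, smul_eq_mul]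
  ring_nf

theorem shearEquiv_map_mulS_II1_11 [CharP K 2] {t t' β δ : K} (hδ : δ ≠ 0) (ht : t = t' * δ)
    (hβ : δ = 1 + β + t' * β ^ 2) (u v : K × K) :
    shearEquiv β δ hδ (mulS 0 t t 0 t 1 u v) =
      mulS 0 t' t' 0 t' 1 (shearEquiv β δ hδ u) (shearEquiv β δ hδ v) := by
  have h2 := CharTwo.two_eq_zero (R := K)
  simp only [shearEquiv_apply, mulS_II1_11, Prod.ext_iff]
  constructor
  · linear_combination (u.1 * v.2 + u.2 * v.1) * ht - t' * β * u.1 * v.1 * h2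
  · linear_combination (β * (u.1 * v.2 + u.2 * v.1) + δ * u.2 * v.2) * ht + u.1 * v.1 * hβ

end

theorem iso_II1_11_char_two_iff {K : Type*} [Field K] [CharP K 2]
    (t t' : K) (ht : t ≠ 0) (ht' : t' ≠ 0) :
    IsoS 0 t t 0 t 1 0 t' t' 0 t' 1 ↔ ∃ x : K, t + t' = x ^ 2 + x := by
  constructor
  · rintro ⟨φ, hφ⟩
    have hB : φ (0, 1) ≠ 0 := by simp
    refine ⟨t' * (φ (1, 0)).2, add_eq_sq_add_of_mulS_II1_11 hB ?_ ?_ ?_⟩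
    · simpa [mulS_II1_11] using (hφ (1, 0) (1, 0)).symm
    · simpa [mulS_II1_11, ← map_smul] using (hφ (0, 1) (0, 1)).symm
    · simpa [mulS_II1_11, ← map_smul, ← map_add] using (hφ (0, 1) (1, 0)).symm
  · rintro ⟨x, hx⟩
    have hδ : t / t' ≠ 0 := div_ne_zero ht ht'
    refine ⟨shearEquiv (x / t') (t / t') hδ, shearEquiv_map_mulS_II1_11 hδ ?_ ?_⟩
    · field_simp
    · field_simp
      linear_combination hx - t' * CharTwo.two_eq_zero (R := K)
end

section
/- Let K be a field with char K = 2 and let a, a' ∈ K*. Then the algebras S(0, a, a, 0, a, 0) and S(0, a', a', 0, a', 0) are isomorphic if and only if there exist x ∈ K* and y ∈ K with a'x² + y² + a = 0. -/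
/-!
In characteristic 2 the algebra `S(0, a, a, 0, a, 0)` is commutative and every square
`(u₁ e + u₂ f)² = (u₁² + a u₂²) f` lies on the line `K f`. An isomorphism `φ` therefore sends
`f = e²` to `(0, N)` with `N = x² + a' x₂²`, where `φ e = (x, x₂)`, so `φ(e f) = φ e · φ f = a' N • φ e`
while `φ(e f) = a • φ e`; hence `a = a' x² + (a' x₂)²`, and `x ≠ 0` because `φ e`, `φ f` are independent.
Conversely, such `x, y` define the lower triangular isomorphism `e ↦ (x, y / a')`, `f ↦ (0, a / a')`.
-/

section

variable {K : Type*} [Field K]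

theorem mulS_II1_12 (a : K) (u v : K × K) :
    mulS 0 a a 0 a 0 u v = (a * (u.1 * v.2 + u.2 * v.1), u.1 * v.1 + a * (u.2 * v.2)) := by
  ext <;> simp only [mulS] <;> ring

theorem mulS_II1_12_of_fst_eq_zero (a n : K) (u : K × K) :
    mulS 0 a a 0 a 0 u (0, n) = (a * n) • u := by
  ext <;> simp only [mulS_II1_12, Prod.smul_fst, Prod.smul_snd, smul_eq_mul] <;> ring

theorem mulS_II1_12_self [CharP K 2] (a : K) (u : K × K) :
    mulS 0 a a 0 a 0 u u = (0, u.1 ^ 2 + a * u.2 ^ 2) := by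
  ext
  · simp only [mulS_II1_12]
    linear_combination a * u.1 * u.2 * CharTwo.two_eq_zero (R := K)
  · simp only [mulS_II1_12]; ring

def lowerTriangularEndo (x β δ : K) : K × K →ₗ[K] K × K :=
  (x • LinearMap.fst K K K).prod (β • LinearMap.fst K K K + δ • LinearMap.snd K K K)

theorem lowerTriangularEndo_apply (x β δ : K) (u : K × K) :
    lowerTriangularEndo x β δ u = (x * u.1, β * u.1 + δ * u.2) := rfl

theorem lowerTriangularEndo_injective {x δ : K} (hx : x ≠ 0) (hδ : δ ≠ 0) (β : K) :
    Function.Injective (lowerTriangularEndo x β δ) := by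
  rw [← LinearMap.ker_eq_bot, LinearMap.ker_eq_bot']
  rintro ⟨u₁, u₂⟩ hu
  simp only [lowerTriangularEndo_apply, Prod.mk_eq_zero] at hu ⊢
  have h₁ : u₁ = 0 := (mul_eq_zero.1 hu.1).resolve_left hx
  subst h₁
  simpa [hδ] using hu.2

theorem exists_of_isoS_II1_12 [CharP K 2] {a a' : K}
    (h : IsoS 0 a a 0 a 0 0 a' a' 0 a' 0) :
    ∃ x : K, x ≠ 0 ∧ ∃ y : K, a' * x ^ 2 + y ^ 2 = a := by
  obtain ⟨φ, hφ⟩ := h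
  set A := φ (1, 0) with hA
  have hf : φ (0, 1) = (0, A.1 ^ 2 + a' * A.2 ^ 2) := by
    rw [← mulS_II1_12_self, hA, ← hφ]; simp [mulS]
  have hA0 : A ≠ 0 := by simp [A]
  have hscale : a • A = (a' * (A.1 ^ 2 + a' * A.2 ^ 2)) • A := by
    rw [← mulS_II1_12_of_fst_eq_zero, ← hf, hA, ← hφ, ← map_smul]
    congr 1; ext <;> simp [mulS]
  have ha : a = a' * (A.1 ^ 2 + a' * A.2 ^ 2) := smul_left_injective K hA0 hscale
  have hA1 : A.1 ≠ 0 := by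
    intro h0
    have hker : φ ((a' * A.2) • (1, 0) - (0, 1)) = 0 := by
      rw [map_sub, map_smul, hf, ← hA]
      ext <;> simp [h0, sq, mul_assoc]
    simpa using congrArg Prod.snd (φ.map_eq_zero_iff.1 hker)
  exact ⟨A.1, hA1, a' * A.2, by rw [ha]; ring⟩

theorem isoS_II1_12_of_eq [CharP K 2] {a a' x y : K} (ha : a ≠ 0) (ha' : a' ≠ 0) (hx : x ≠ 0)
    (h : a' * x ^ 2 + y ^ 2 = a) :
    IsoS 0 a a 0 a 0 0 a' a' 0 a' 0 := by
  have hδ : a / a' ≠ 0 := div_ne_zero ha ha'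
  refine ⟨.ofInjectiveEndo _ (lowerTriangularEndo_injective hx hδ (y / a')), fun u v => ?_⟩
  simp only [LinearEquiv.coe_ofInjectiveEndo, lowerTriangularEndo_apply, mulS_II1_12]
  ext
  · field_simp
    linear_combination (-u.1 * v.1 * y) * CharTwo.two_eq_zero (R := K)
  · field_simp
    linear_combination (-u.1 * v.1) * h

end

theorem iso_II1_12_char_two_iff {K : Type*} [Field K] [CharP K 2]
    (a a' : K) (ha : a ≠ 0) (ha' : a' ≠ 0) :
    IsoS 0 a a 0 a 0 0 a' a' 0 a' 0 ↔
      ∃ x : K, x ≠ 0 ∧ ∃ y : K, a' * x ^ 2 + y ^ 2 + a = 0 := by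
  simp only [CharTwo.add_eq_zero]
  exact ⟨exists_of_isoS_II1_12, fun ⟨x, hx, y, h⟩ => isoS_II1_12_of_eq ha ha' hx h⟩
end

section
/- Let K be a field with char K ≠ 2 and let t, t' ∈ K* with t ≠ 1, t ≠ −1, t' ≠ 1, t' ≠ −1. Then the algebras S(0, (1+t)²/4, (t²−1)/4, 1, (1−t²)/4, t) and S(0, (1+t')²/4, (t'²−1)/4, 1, (1−t'²)/4, t') are isomorphic if and only if t = t'. -/
theorem iso_II1_4_char_ne_two_iff {K : Type*} [Field K] (h2 : (2 : K) ≠ 0)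
    (t t' : K) (ht0 : t ≠ 0) (ht1 : t ≠ 1) (htm1 : t ≠ -1)
    (ht0' : t' ≠ 0) (ht1' : t' ≠ 1) (htm1' : t' ≠ -1) :
    IsoS 0 ((1 + t) ^ 2 / 4) ((t ^ 2 - 1) / 4) 1 ((1 - t ^ 2) / 4) t
         0 ((1 + t') ^ 2 / 4) ((t' ^ 2 - 1) / 4) 1 ((1 - t' ^ 2) / 4) t' ↔
      t = t' := by
  have h4 : (4 : K) ≠ 0 := by
    intro h
    apply h2
    have : (2 : K) * 2 = 0 := by rw [← h]; norm_num
    rcases mul_eq_zero.mp this with h' | h' <;> exact h'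
  have h1t : (1 : K) + t ≠ 0 := fun h => htm1 (by linear_combination h)
  constructor
  · rintro ⟨φ, hφ⟩
    set A := (φ (1, 0)).1 with hA
    set C := (φ (1, 0)).2 with hC
    set B := (φ (0, 1)).1 with hB
    set D := (φ (0, 1)).2 with hD
    have hφxy : ∀ x y : K, φ (x, y) = (x * A + y * B, x * C + y * D) := by
      intro x y
      have hxy : (x, y) = x • ((1 : K), (0 : K)) + y • ((0 : K), (1 : K)) := by
        simp [Prod.ext_iff]
      rw [hxy, map_add, map_smul, map_smul]
      simp [hA, hC, hB, hD, Prod.ext_iff, Prod.smul_def, smul_eq_mul]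
    -- equation from (e,e)
    have hee := hφ (1, 0) (1, 0)
    have hef := hφ (1, 0) (0, 1)
    have hff := hφ (0, 1) (0, 1)
    simp only [mulS] at hee hef hff
    norm_num at hee hef hff
    rw [hφxy] at hee hff
    rw [show ((t ^ 2 - 1) / 4, (1 : K)) = (((t ^ 2 - 1) / 4 : K), (1 : K)) from rfl,
      hφxy] at hef
    have hφ01 : φ (0, 1) = (B, D) := by rw [hφxy]; norm_num
    simp only [← hA, ← hC, ← hB, ← hD] at hee hef hff
    have h1 : B = A * C * ((t' ^ 2 - 1) / 4) + C * A * ((1 - t' ^ 2) / 4) := by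
      have := congrArg Prod.fst hee
      simpa using this
    have hB0 : B = 0 := by linear_combination h1
    have h3 : (t ^ 2 - 1) / 4 * A + B =
        A * D * ((t' ^ 2 - 1) / 4) + C * B * ((1 - t' ^ 2) / 4) := by
      have := congrArg Prod.fst hef
      simpa using this
    have h8 : (1 + t) ^ 2 / 4 * D =
        B * B + B * D * 1 + D * B * t' + D * D * ((1 + t') ^ 2 / 4) := by
      have := congrArg Prod.snd hff
      simpa using this
    -- D ≠ 0
    have hDne : D ≠ 0 := by
      intro hD0
      have : φ (0, 1) = φ (0, 0) := by
        rw [hφ01, hD0, hB0]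
        simp [hφxy]
      have := φ.injective this
      simp [Prod.ext_iff] at this
    have hAne : A ≠ 0 := by
      intro hA0
      have : φ (D, -C) = φ (0, 0) := by
        rw [hφxy, hφxy]
        simp [hA0, hB0]
        ring
      have := φ.injective this
      rw [Prod.ext_iff] at this
      exact hDne this.1
    rw [hB0] at h3 h8
    have ha : t ^ 2 - 1 = D * (t' ^ 2 - 1) := by
      have h3' : A * ((t ^ 2 - 1) * (4 : K)⁻¹) = A * ((D * (t' ^ 2 - 1)) * (4 : K)⁻¹) := by
        linear_combination h3
      exact mul_right_cancel₀ (inv_ne_zero h4) (mul_left_cancel₀ hAne h3')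
    have hq : (1 + t) ^ 2 = D * (1 + t') ^ 2 := by
      have h8' : D * ((1 + t) ^ 2 * (4 : K)⁻¹) = D * ((D * (1 + t') ^ 2) * (4 : K)⁻¹) := by
        linear_combination h8
      exact mul_right_cancel₀ (inv_ne_zero h4) (mul_left_cancel₀ hDne h8')
    have key : (2 : K) * (1 + t) * (1 + t') * (t - t') = 0 := by
      linear_combination (1 + t') ^ 2 * ha - (t' ^ 2 - 1) * hq
    have h1t' : (1 : K) + t' ≠ 0 := fun h => htm1' (by linear_combination h)
    rcases mul_eq_zero.mp key with h | h
    · rcases mul_eq_zero.mp h with h | h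
      · rcases mul_eq_zero.mp h with h | h
        · exact absurd h h2
        · exact absurd h h1t
      · exact absurd h h1t'
    · linear_combination h
  · intro h
    subst h
    exact ⟨LinearEquiv.refl K (K × K), fun u v => rfl⟩
end
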